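/- For α = 1, a strategy profile s is a strong equilibrium of the network creation game if and only if s is rational, G(s) has diameter at most 2, and the complement of G(s) is a forest. -/

import Mathlib

open SimpleGraph ENNReal Finset

/-- A strategy profile: each player chooses a set of other players. -/
abbrev Profile (n : ℕ) := Fin n → Finset (Fin n)

/-- Validity: no player buys an edge to herself. -/
def Valid {n : ℕ} (s : Profile n) : Prop := ∀ i, i ∉ s i

/-- The graph formed by a strategy profile: `{i,j}` is an edge iff `j ∈ s i` or `i ∈ s j`. -/
def NCGraph {n : ℕ} (s : Profile n) : SimpleGraph (Fin n) :=
  SimpleGraph.fromRel (fun i j => j ∈ s i)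

instance {n : ℕ} (s : Profile n) : DecidableRel (NCGraph s).Adj := fun i j =>
  decidable_of_iff (i ≠ j ∧ (j ∈ s i ∨ i ∈ s j))
    (SimpleGraph.fromRel_adj (fun a b => b ∈ s a) i j).symm

/-- Distance cost of player `i`: sum of (extended) distances to all players. -/
noncomputable def dCost {n : ℕ} (s : Profile n) (i : Fin n) : ℝ≥0∞ :=
  ∑ j, ((NCGraph s).edist i j : ℝ≥0∞)

/-- Total cost of player `i` in the network creation game with parameter `α`. -/
noncomputable def cost {n : ℕ} (α : ℝ) (s : Profile n) (i : Fin n) : ℝ≥0∞ :=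
  ENNReal.ofReal α * (s i).card + dCost s i

/-- Social cost: sum of all players' costs. -/
noncomputable def socialCost {n : ℕ} (α : ℝ) (s : Profile n) : ℝ≥0∞ :=
  ∑ i, cost α s i

/-- A profile is rational if no edge is bought by both of its endpoints. -/
def Rational {n : ℕ} (s : Profile n) : Prop := ∀ i j, j ∈ s i → i ∉ s j

/-- Pure Nash equilibrium. -/
def IsNashEq {n : ℕ} (α : ℝ) (s : Profile n) : Prop :=
  ∀ (i : Fin n) (t : Finset (Fin n)), i ∉ t →
    cost α s i ≤ cost α (Function.update s i t) i

/-- Strong equilibrium: no nonempty coalition has a joint deviation strictly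
decreasing every member's cost. -/
def IsStrongEq {n : ℕ} (α : ℝ) (s : Profile n) : Prop :=
  ∀ (K : Finset (Fin n)) (s' : Profile n), K.Nonempty → Valid s' →
    (∀ i ∉ K, s' i = s i) → ∃ i ∈ K, cost α s i ≤ cost α s' i

/-- A star graph: one center adjacent to all other vertices, and no other edges. -/
def IsStar {V : Type*} (G : SimpleGraph V) : Prop :=
  ∃ c : V, ∀ i j : V, G.Adj i j ↔ i ≠ j ∧ (i = c ∨ j = c)

/-!
When every player is within distance 2 of all others, the cost of player `i` for `α = 1` is
`n - 1 + |s i| + deg i`, where `deg` is the degree in the complement of `G(s)`; so everything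
reduces to counting.

Necessity. If `G(s)` is disconnected every cost is infinite and all players profit by forming a
star; a player at distance at least 3 from `j` profits from buying `ij`; a doubly bought edge
can be dropped by one of its buyers; and along a cycle of the complement every vertex can buy
the edge to its successor, paying one edge and getting two vertices from distance 2 to 1.

Sufficiency. Split `|s i| + deg i` over the other players as `pairCost s i j`, which is
`[i buys ij] + [ij is not an edge]`. Under a deviation of a coalition `K`, the charge of a member
on an outsider cannot drop, and the total charge of a pair inside `K` drops by at most one
(as `s` is rational), and only for an edge of the complement that the deviation turns into an
edge. These pairs form a subforest of the complement on `K`, so the coalition saves less than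
`|K|` in total.
-/

namespace SimpleGraph

variable {V : Type*} {G : SimpleGraph V} {u v : V}

lemma two_le_edist (hne : u ≠ v) (hna : ¬G.Adj u v) : 2 ≤ G.edist u v := by
  by_contra! h
  have : G.edist u v ≤ 1 := Order.le_of_lt_add_one h
  rw [edist_le_one_iff_adj_or_eq] at this
  tauto

section Degree

variable [DecidableEq V] [DecidableRel G.Adj]

lemma ite_add_ite_le_edist :
    (((if u ≠ v then 1 else 0) + (if Gᶜ.Adj u v then 1 else 0) : ℕ) : ℕ∞) ≤
      G.edist u v := by
  by_cases huv : u = v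
  · simp [huv]
  by_cases hadj : G.Adj u v
  · simp [huv, hadj, edist_eq_one_iff_adj.mpr hadj]
  · simpa [huv, hadj] using two_le_edist huv hadj

lemma edist_eq_ite_add_ite (h : G.edist u v ≤ 2) :
    G.edist u v =
      (((if u ≠ v then 1 else 0) + (if Gᶜ.Adj u v then 1 else 0) : ℕ) : ℕ∞) := by
  by_cases huv : u = v
  · simp [huv]
  by_cases hadj : G.Adj u v
  · simp [huv, hadj, edist_eq_one_iff_adj.mpr hadj]
  · simpa [huv, hadj] using h.antisymm (two_le_edist huv hadj)

variable [Fintype V]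

lemma sum_ite_add_ite (u : V) :
    ∑ v, ((if u ≠ v then 1 else 0) + (if Gᶜ.Adj u v then 1 else 0) : ℕ) =
      Fintype.card V - 1 + Gᶜ.degree u := by
  rw [sum_add_distrib, ← card_neighborFinset_eq_degree, neighborFinset_eq_filter, sum_boole,
    sum_boole, filter_ne, card_erase_of_mem (mem_univ u), card_univ]
  simp

lemma card_sub_one_add_degree_compl_le_sum_edist (u : V) :
    ((Fintype.card V - 1 + Gᶜ.degree u : ℕ) : ℕ∞) ≤ ∑ v, G.edist u v := by
  rw [← sum_ite_add_ite, Nat.cast_sum]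
  exact sum_le_sum fun v _ => ite_add_ite_le_edist

lemma sum_edist_eq_of_edist_le_two {u : V} (h : ∀ v, G.edist u v ≤ 2) :
    ∑ v, G.edist u v = (Fintype.card V - 1 + Gᶜ.degree u : ℕ) := by
  rw [← sum_ite_add_ite, Nat.cast_sum]
  exact sum_congr rfl fun v _ => edist_eq_ite_add_ite (h v)

lemma degree_compl_add_card_le {G' : SimpleGraph V} [DecidableRel G'.Adj] (hle : G ≤ G')
    {v : V} {A : Finset V} (hA : ∀ a ∈ A, Gᶜ.Adj v a ∧ G'.Adj v a) :
    G'ᶜ.degree v + #A ≤ Gᶜ.degree v := by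
  rw [← card_neighborFinset_eq_degree, ← card_neighborFinset_eq_degree,
    ← card_union_of_disjoint]
  · refine card_le_card (union_subset (fun a ha => ?_) fun a ha => ?_)
    · simp only [mem_neighborFinset, compl_adj] at ha ⊢
      exact ⟨ha.1, fun h => ha.2 (hle h)⟩
    · simpa using (hA a ha).1
  · refine Finset.disjoint_left.mpr fun a ha ha' => ?_
    simp only [mem_neighborFinset, compl_adj] at ha
    exact ha.2 (hA a ha').2

end Degree

lemma IsAcyclic.card_edgeFinset_lt [Fintype V] [Nonempty V] [Fintype G.edgeSet]
    (h : G.IsAcyclic) : #G.edgeFinset < Fintype.card V := by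
  classical
  obtain ⟨T, hGT, -, hT⟩ := connected_top.exists_isTree_le_of_le_of_isAcyclic le_top h
  have := hT.card_edgeFinset
  have := card_le_card (edgeFinset_mono hGT)
  omega

lemma IsAcyclic.sum_sum_adj_lt [DecidableRel G.Adj] (h : G.IsAcyclic) {K : Finset V}
    (hK : K.Nonempty) : ∑ i ∈ K, ∑ j ∈ K, (if G.Adj i j then 1 else 0) < 2 * #K := by
  classical
  have : Nonempty K := hK.to_subtype
  have hsum : ∑ i ∈ K, ∑ j ∈ K, (if G.Adj i j then 1 else 0) =
      ∑ v : K, (G.induce (K : Set V)).degree v := by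
    rw [← sum_coe_sort]
    refine sum_congr rfl fun v _ => ?_
    rw [← card_neighborFinset_eq_degree, neighborFinset_eq_filter, card_filter,
      ← sum_coe_sort K]
    simp
  rw [hsum, sum_degrees_eq_twice_card_edges]
  have := (h.induce (K : Set V)).card_edgeFinset_lt
  simp only [SetLike.coe_sort_coe, Fintype.card_coe] at this
  omega

end SimpleGraph

lemma two_mul_sum_sum_eq_sum_sum_add_swap {α : Type*} (K : Finset α) (f : α → α → ℕ) :
    2 * ∑ i ∈ K, ∑ j ∈ K, f i j = ∑ i ∈ K, ∑ j ∈ K, (f i j + f j i) := by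
  simp_rw [sum_add_distrib]
  rw [sum_comm (f := fun i j => f j i), two_mul]

section Profile

variable {n : ℕ} {s s' : Profile n} {i j : Fin n}

lemma ncGraph_adj : (NCGraph s).Adj i j ↔ i ≠ j ∧ (j ∈ s i ∨ i ∈ s j) :=
  fromRel_adj ..

lemma ncGraph_mono (h : ∀ i, s i ⊆ s' i) : NCGraph s ≤ NCGraph s' := fun i j hij => by
  rw [ncGraph_adj] at hij ⊢
  exact ⟨hij.1, hij.2.imp (@h i j) (@h j i)⟩

lemma Valid.update (hv : Valid s) {t : Finset (Fin n)} (hi : i ∉ t) :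
    Valid (Function.update s i t) := by
  intro k
  rcases eq_or_ne k i with rfl | hk
  · simpa
  · simpa [hk] using hv k

lemma cost_one_eq (s : Profile n) (i : Fin n) :
    cost 1 s i = (((s i).card + ∑ j, (NCGraph s).edist i j : ℕ∞) : ℝ≥0∞) := by
  simp [cost, dCost]
  exact (map_sum ENat.toENNRealRingHom _ _).symm

lemma natCast_le_cost_one (s : Profile n) (i : Fin n) :
    (((s i).card + (n - 1 + (NCGraph s)ᶜ.degree i) : ℕ) : ℝ≥0∞) ≤ cost 1 s i := by
  rw [cost_one_eq, ← ENat.toENNReal_coe, ENat.toENNReal_le, Nat.cast_add]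
  have := (NCGraph s).card_sub_one_add_degree_compl_le_sum_edist i
  rw [Fintype.card_fin] at this
  gcongr

lemma cost_one_eq_of_edist_le_two (hd : ∀ j, (NCGraph s).edist i j ≤ 2) :
    cost 1 s i = (((s i).card + (n - 1 + (NCGraph s)ᶜ.degree i) : ℕ) : ℝ≥0∞) := by
  rw [cost_one_eq, sum_edist_eq_of_edist_le_two hd, Fintype.card_fin]
  norm_cast

lemma card_add_degree_compl_lt_of_cost_one_lt (hd : ∀ j, (NCGraph s).edist i j ≤ 2)
    (h : cost 1 s' i < cost 1 s i) :
    (s' i).card + (NCGraph s')ᶜ.degree i < (s i).card + (NCGraph s)ᶜ.degree i := by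
  have := (natCast_le_cost_one s' i).trans_lt (h.trans_eq (cost_one_eq_of_edist_le_two hd))
  norm_cast at this
  omega

lemma cost_one_lt_of_card_add_degree_compl_lt (hd : ∀ j, (NCGraph s).edist i j ≤ 2)
    (hd' : ∀ j, (NCGraph s').edist i j ≤ 2)
    (h : (s' i).card + (NCGraph s')ᶜ.degree i < (s i).card + (NCGraph s)ᶜ.degree i) :
    cost 1 s' i < cost 1 s i := by
  rw [cost_one_eq_of_edist_le_two hd, cost_one_eq_of_edist_le_two hd']
  norm_cast
  omega

lemma IsStrongEq.isNashEq {α : ℝ} (hv : Valid s) (hse : IsStrongEq α s) : IsNashEq α s := by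
  intro i t hit
  obtain ⟨k, hk, hle⟩ := hse {i} (Function.update s i t) (singleton_nonempty i) (hv.update hit)
    fun k hk => Function.update_of_ne (by simpa using hk) ..
  rw [mem_singleton] at hk
  exact hk ▸ hle

def starProfile (c : Fin n) : Profile n := fun k => if k = c then ∅ else {c}

lemma starProfile_valid (c : Fin n) : Valid (starProfile c) := by
  intro k
  by_cases hk : k = c <;> simp [starProfile, hk]

lemma edist_starProfile_le_two (c i j : Fin n) : (NCGraph (starProfile c)).edist i j ≤ 2 := by
  have hc : ∀ k, (NCGraph (starProfile c)).edist k c ≤ 1 := fun k => by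
    rw [edist_le_one_iff_adj_or_eq, ncGraph_adj]
    by_cases hk : k = c <;> simp [starProfile, hk]
  calc (NCGraph (starProfile c)).edist i j
      ≤ (NCGraph (starProfile c)).edist i c + (NCGraph (starProfile c)).edist c j :=
        SimpleGraph.edist_triangle
    _ ≤ 1 + 1 := add_le_add (hc i) (edist_comm.trans_le (hc j))
    _ = 2 := one_add_one_eq_two

lemma cost_one_eq_top_of_edist_eq_top (h : (NCGraph s).edist i j = ⊤) : cost 1 s i = ⊤ := by
  rw [cost_one_eq, ENat.sum_eq_top.mpr ⟨j, mem_univ j, h⟩, add_top, ENat.toENNReal_top]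

lemma IsStrongEq.edist_ne_top (hse : IsStrongEq 1 s) (i j : Fin n) :
    (NCGraph s).edist i j ≠ ⊤ := by
  intro hij
  have htop : ∀ k, cost 1 s k = ⊤ := fun k => by
    have : (NCGraph s).edist k i = ⊤ ∨ (NCGraph s).edist k j = ⊤ := by
      by_contra! h
      have := (NCGraph s).edist_triangle (u := i) (v := k) (w := j)
      rw [hij, edist_comm, top_le_iff, ENat.add_eq_top] at this
      tauto
    rcases this with h | h <;> exact cost_one_eq_top_of_edist_eq_top h
  obtain ⟨k, -, hk⟩ := hse univ (starProfile i) ⟨i, mem_univ i⟩ (starProfile_valid i)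
    (by simp)
  rw [htop k, top_le_iff, cost_one_eq_of_edist_le_two (edist_starProfile_le_two i k)] at hk
  exact natCast_ne_top _ hk

lemma IsNashEq.edist_le_two (hv : Valid s) (hnash : IsNashEq 1 s)
    (hfin : ∀ i j, (NCGraph s).edist i j ≠ ⊤) (i j : Fin n) :
    (NCGraph s).edist i j ≤ 2 := by
  by_contra! hij
  obtain ⟨hne, hna, -⟩ := two_lt_edist_iff.mp hij
  have hj : j ∉ s i := fun h => hna (ncGraph_adj.mpr ⟨hne, .inl h⟩)
  set s' := Function.update s i (insert j (s i))
  have hle : NCGraph s ≤ NCGraph s' := ncGraph_mono fun k => by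
    by_cases hk : k = i <;> simp [s', hk, subset_insert]
  have hadj : (NCGraph s').Adj i j := ncGraph_adj.mpr ⟨hne, .inl (by simp [s'])⟩
  have hrest : ∑ k ∈ univ.erase j, (NCGraph s').edist i k ≤
      ∑ k ∈ univ.erase j, (NCGraph s).edist i k :=
    sum_le_sum fun k _ => edist_anti hle
  have hcost := hnash i (insert j (s i)) (by simp [hne, hv i])
  rw [cost_one_eq, cost_one_eq, ENat.toENNReal_le, Function.update_self, card_insert_of_notMem hj,
    ← add_sum_erase _ _ (mem_univ j), ← add_sum_erase _ _ (mem_univ j),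
    edist_eq_one_iff_adj.mpr hadj] at hcost
  have hr : ∑ k ∈ univ.erase j, (NCGraph s).edist i k ≠ ⊤ :=
    ENat.sum_ne_top.mpr fun k _ => hfin i k
  generalize ∑ k ∈ univ.erase j, (NCGraph s).edist i k = r at hrest hcost hr
  generalize ∑ k ∈ univ.erase j, (NCGraph s').edist i k = r' at hrest hcost
  lift r to ℕ using hr
  lift r' to ℕ using ne_top_of_le_ne_top (ENat.natCast_ne_top r) hrest
  lift (NCGraph s).edist i j to ℕ using hfin i j with d
  norm_cast at *
  omega

lemma IsNashEq.rational (hv : Valid s) (hnash : IsNashEq 1 s)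
    (hd : ∀ i j, (NCGraph s).edist i j ≤ 2) : Rational s := by
  intro i j hji hij
  have hG : NCGraph (Function.update s i ((s i).erase j)) = NCGraph s := by
    ext a b
    simp only [ncGraph_adj, Function.update_apply]
    grind
  have hcost := hnash i ((s i).erase j) fun h => hv i (mem_of_mem_erase h)
  refine hcost.not_gt (cost_one_lt_of_card_add_degree_compl_lt (hd i) (hG ▸ hd i) ?_)
  have hdeg : (NCGraph (Function.update s i ((s i).erase j)))ᶜ.degree i =
      (NCGraph s)ᶜ.degree i := by
    congr!
  rw [hdeg, Function.update_self, card_erase_of_mem hji]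
  have := card_pos.mpr ⟨j, hji⟩
  omega

def buyAlong {m : ℕ} [NeZero m] (s : Profile n) (φ : Fin m → Fin n) : Profile n :=
  fun x => s x ∪ (univ.filter (φ · = x)).image (fun i => φ (i + 1))

section buyAlong

variable {m : ℕ} [NeZero m] {φ : Fin m → Fin n}

lemma subset_buyAlong (x : Fin n) : s x ⊆ buyAlong s φ x := subset_union_left

lemma buyAlong_of_notMem (x : Fin n) (hx : x ∉ Set.range φ) : buyAlong s φ x = s x := by
  simp_all [buyAlong]

lemma card_buyAlong_le (hφ : φ.Injective) (x : Fin n) : #(buyAlong s φ x) ≤ #(s x) + 1 := by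
  refine (card_union_le _ _).trans (Nat.add_le_add_left (card_image_le.trans ?_) _)
  exact card_le_one.mpr fun a ha b hb => hφ ((mem_filter.mp ha).2.trans (mem_filter.mp hb).2.symm)

lemma ncGraph_buyAlong_adj (hφ : ∀ i, φ i ≠ φ (i + 1)) (i : Fin m) :
    (NCGraph (buyAlong s φ)).Adj (φ i) (φ (i + 1)) :=
  ncGraph_adj.mpr ⟨hφ i, .inl (mem_union_right _ (mem_image.mpr ⟨i, by simp, rfl⟩))⟩

lemma Valid.buyAlong (hv : Valid s) (hφ : ∀ i, φ i ≠ φ (i + 1)) : Valid (buyAlong s φ) := by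
  intro x hx
  rcases mem_union.mp hx with hx | hx
  · exact hv x hx
  · obtain ⟨i, hi, hix⟩ := mem_image.mp hx
    exact hφ i ((mem_filter.mp hi).2.trans hix.symm)

end buyAlong

lemma IsStrongEq.isAcyclic_compl (hv : Valid s) (hse : IsStrongEq 1 s)
    (hd : ∀ i j, (NCGraph s).edist i j ≤ 2) : (NCGraph s)ᶜ.IsAcyclic := by
  rw [isAcyclic_iff_free_cycleGraph]
  rintro m hm ⟨φ⟩
  obtain ⟨k, rfl⟩ : ∃ k, m = k + 3 := ⟨m - 3, by omega⟩
  have hφ : ∀ i, φ i ≠ φ (i + 1) := fun i => (φ.toHom.map_adj (by simp [cycleGraph_adj])).ne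
  set s' := buyAlong s φ
  have hle : NCGraph s ≤ NCGraph s' := ncGraph_mono subset_buyAlong
  obtain ⟨x, hxK, hx⟩ := hse (univ.image φ) s' (by simp) (hv.buyAlong hφ)
    fun x hx => buyAlong_of_notMem x (by simpa using hx)
  obtain ⟨i, -, rfl⟩ := mem_image.mp hxK
  refine hx.not_gt (cost_one_lt_of_card_add_degree_compl_lt (hd _)
    (fun j => (edist_anti hle).trans (hd _ j)) ?_)
  have hnbrs := degree_compl_add_card_le hle (v := φ i)
    (A := ((cycleGraph (k + 3)).neighborFinset i).map φ.toEmbedding) fun a ha => by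
      obtain ⟨j, hj, rfl⟩ := mem_map.mp ha
      rw [mem_neighborFinset] at hj
      refine ⟨φ.toHom.map_adj hj, ?_⟩
      rcases hj with h | h
      · obtain rfl := sub_eq_iff_eq_add'.mp h
        exact (ncGraph_buyAlong_adj hφ j).symm
      · obtain rfl := sub_eq_iff_eq_add'.mp h
        exact ncGraph_buyAlong_adj hφ i
  rw [card_map, card_neighborFinset_eq_degree, cycleGraph_degree_three_le] at hnbrs
  have hcard : #(s' (φ i)) ≤ #(s (φ i)) + 1 := card_buyAlong_le φ.injective _
  omega

def pairCost (s : Profile n) (i j : Fin n) : ℕ :=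
  (if j ∈ s i then 1 else 0) + (if (NCGraph s)ᶜ.Adj i j then 1 else 0)

lemma sum_pairCost (s : Profile n) (i : Fin n) :
    ∑ j, pairCost s i j = #(s i) + (NCGraph s)ᶜ.degree i := by
  simp only [pairCost]
  rw [sum_add_distrib, sum_boole, sum_boole, ← card_neighborFinset_eq_degree,
    neighborFinset_eq_filter]
  simp

lemma pairCost_add_pairCost_le (hv : Valid s) (hrat : Rational s) (s' : Profile n)
    (i j : Fin n) :
    pairCost s i j + pairCost s j i ≤ pairCost s' i j + pairCost s' j i +
      if ((NCGraph s)ᶜ ⊓ NCGraph s').Adj i j then 1 else 0 := by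
  simp only [pairCost, compl_adj, inf_adj, ncGraph_adj]
  have := hv i
  have := hrat i j
  have := hrat j i
  split_ifs <;> grind

lemma pairCost_le_of_eq (hrat : Rational s) (hj : s' j = s j) :
    pairCost s i j ≤ pairCost s' i j := by
  simp only [pairCost, compl_adj, ncGraph_adj, hj]
  have := hrat j i
  split_ifs <;> grind

lemma sum_sum_pairCost_lt (hv : Valid s) (hrat : Rational s) (hforest : (NCGraph s)ᶜ.IsAcyclic)
    {K : Finset (Fin n)} (hK : K.Nonempty) (hout : ∀ j ∉ K, s' j = s j) :
    ∑ i ∈ K, ∑ j, pairCost s i j < ∑ i ∈ K, ∑ j, pairCost s' i j + #K := by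
  have hin : 2 * ∑ i ∈ K, ∑ j ∈ K, pairCost s i j <
      2 * ∑ i ∈ K, ∑ j ∈ K, pairCost s' i j + 2 * #K := by
    rw [two_mul_sum_sum_eq_sum_sum_add_swap, two_mul_sum_sum_eq_sum_sum_add_swap]
    calc ∑ i ∈ K, ∑ j ∈ K, (pairCost s i j + pairCost s j i)
        ≤ ∑ i ∈ K, ∑ j ∈ K, (pairCost s' i j + pairCost s' j i +
            if ((NCGraph s)ᶜ ⊓ NCGraph s').Adj i j then 1 else 0) :=
          sum_le_sum fun i _ => sum_le_sum fun j _ => pairCost_add_pairCost_le hv hrat s' i j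
      _ = ∑ i ∈ K, ∑ j ∈ K, (pairCost s' i j + pairCost s' j i) +
            ∑ i ∈ K, ∑ j ∈ K,
              (if ((NCGraph s)ᶜ ⊓ NCGraph s').Adj i j then 1 else 0) := by
          simp_rw [sum_add_distrib]
      _ < _ := by
          gcongr
          exact (hforest.anti inf_le_left).sum_sum_adj_lt hK
  have hcompl :
      ∑ i ∈ K, ∑ j ∈ Kᶜ, pairCost s i j ≤ ∑ i ∈ K, ∑ j ∈ Kᶜ, pairCost s' i j :=
    sum_le_sum fun i _ => sum_le_sum fun j hj =>
      pairCost_le_of_eq hrat (hout j (mem_compl.mp hj))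
  simp_rw [← sum_add_sum_compl K (pairCost _ _)]
  rw [sum_add_distrib, sum_add_distrib]
  omega

lemma isStrongEq_one (hv : Valid s) (hrat : Rational s) (hd : ∀ i j, (NCGraph s).edist i j ≤ 2)
    (hforest : (NCGraph s)ᶜ.IsAcyclic) : IsStrongEq 1 s := by
  intro K s' hK _ hout
  by_contra! hlt
  have hsum : ∑ i ∈ K, (∑ j, pairCost s' i j + 1) ≤ ∑ i ∈ K, ∑ j, pairCost s i j :=
    sum_le_sum fun i hi => by
      rw [sum_pairCost, sum_pairCost]
      exact card_add_degree_compl_lt_of_cost_one_lt (hd i) (hlt i hi)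
  rw [sum_add_distrib, sum_const, smul_eq_mul, mul_one] at hsum
  have := sum_sum_pairCost_lt hv hrat hforest hK hout
  omega

end Profile

theorem stmt7_general {n : ℕ} (s : Profile n) (hv : Valid s) :
    IsStrongEq 1 s ↔
      Rational s ∧ (∀ i j : Fin n, (NCGraph s).edist i j ≤ 2) ∧
        (NCGraph s)ᶜ.IsAcyclic := by
  refine ⟨fun hse => ?_, fun ⟨hrat, hd, hforest⟩ => isStrongEq_one hv hrat hd hforest⟩
  have hd := (hse.isNashEq hv).edist_le_two hv hse.edist_ne_top
  exact ⟨(hse.isNashEq hv).rational hv hd, hd, hse.isAcyclic_compl hv hd⟩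

/-- For `α = 1`, a profile is a strong equilibrium iff it is rational, the graph
has diameter at most `2`, and the complement of the graph is a forest. -/
theorem stmt7 {n : ℕ} (hn : 3 ≤ n) (s : Profile n) (hv : Valid s) :
    IsStrongEq 1 s ↔
      Rational s ∧ (∀ i j : Fin n, (NCGraph s).edist i j ≤ 2) ∧
        (NCGraph s)ᶜ.IsAcyclic :=
  stmt7_general s hv
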